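/- In the game Nim ⊙ Euclid (players play 2-heap Nim until one pushes the button, after which they play Euclid — remove a positive multiple of the smaller heap from the larger, heaps staying positive, with the extra rule that from (0,i), i>0, the only move is to (0,0); last player to move wins), the position (0,1) is a P-position, and for every n ≥ 1 every pair (a,b) with 0 < a ≤ b and b = ⌈Φ·a⌉ where (a,b) is either a Wythoff pair not of the form (F_{2k+1}−1, F_{2k+2}−1), or of the form (F_{2k+2}−1, F_{2k+3}−1), is a P-position of Nim ⊙ Euclid. -/

import Mathlib

/-!
Before the button is pushed, a player pushes exactly when the pair is a P-position of Euclid: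
`(0, 0)` or a positive pair whose ratio is below `φ`. The other unpushed P-positions are the
modified Wythoff pairs `(a, ⌈φ a⌉)`, and every `n` lies in exactly one of them: Rayleigh's theorem
for the Beatty sequences of `φ` and `φ + 1` handles the Wythoff pairs, and the Binet formula gives
`⌈φ (F n - 1)⌉ = F (n + 1) - 1` for `n ≥ 3`, which lets the Fibonacci pairs take the place of the
excluded ones. Hence no Nim move joins two such pairs, while from any other pair `a ≤ b` with
`φ a < b` one lowers `b` to the partner of `a`, which is at most `⌈φ a⌉`. Moves decrease the total
heap size plus the button, so these properties determine the P-positions.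
-/

noncomputable def Φ : ℝ := (1 + Real.sqrt 5) / 2

/-- The move relation of the variant of Euclid: from `(a,b)` with `0 < a ≤ b`,
remove a positive multiple of `a` from `b` keeping it positive (symmetrically if
`b < a`); from `(0,i)` with `i > 0`, the single move to `(0,0)`. -/
def euclidMove (p q : ℕ × ℕ) : Prop :=
  (p.1 = 0 ∧ 0 < p.2 ∧ q = (0, 0)) ∨
  (p.2 = 0 ∧ 0 < p.1 ∧ q = (0, 0)) ∨
  (0 < p.1 ∧ p.1 ≤ p.2 ∧ ∃ k, 1 ≤ k ∧ 0 < p.2 - k * p.1 ∧ q = (p.1, p.2 - k * p.1)) ∨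
  (0 < p.2 ∧ p.2 < p.1 ∧ ∃ k, 1 ≤ k ∧ 0 < p.1 - k * p.2 ∧ q = (p.1 - k * p.2, p.2))

/-- Two-heap Nim move relation. -/
def nimMove (p q : ℕ × ℕ) : Prop :=
  (q.1 < p.1 ∧ q.2 = p.2) ∨ (q.2 < p.2 ∧ q.1 = p.1)

/-- The move relation of `Nim ⊙ Euclid`. Positions are `Bool × (ℕ × ℕ)`,
`(true, p)` meaning the button has not yet been pushed. -/
def nimPushEuclidMove (p q : Bool × (ℕ × ℕ)) : Prop :=
  (p.1 = true ∧ ((q.1 = true ∧ nimMove p.2 q.2) ∨ q = (false, p.2))) ∨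
  (p.1 = false ∧ q.1 = false ∧ euclidMove p.2 q.2)

open Real
open scoped goldenRatio

theorem WellFounded.kernel_unique {α : Type*} {r : α → α → Prop} (hr : WellFounded (flip r))
    {P Q : α → Prop} (hP : ∀ p, P p ↔ ∀ q, r p q → ¬ P q) (hQ : ∀ p, Q p ↔ ∀ q, r p q → ¬ Q q)
    (p : α) : P p ↔ Q p :=
  hr.induction (C := fun p => P p ↔ Q p) p fun p ih => by
    rw [hP, hQ]
    exact forall₂_congr fun q hq => not_congr (ih q hq)

theorem irrational_goldenRatio_mul_natCast {a : ℕ} (ha : 0 < a) : Irrational (φ * a) :=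
  goldenRatio_irrational.mul_natCast ha.ne'

theorem holderConjugate_goldenRatio_add_one : Real.HolderConjugate φ (φ + 1) := by
  rw [Real.holderConjugate_iff_eq_conjExponent one_lt_goldenRatio,
    eq_div_iff (sub_pos.2 one_lt_goldenRatio).ne']
  linear_combination goldenRatio_sq

theorem strictMono_ceil_goldenRatio_mul : StrictMono fun a : ℕ => ⌈φ * a⌉ :=
  strictMono_nat_of_lt_succ fun a =>
    calc ⌈φ * a⌉ < ⌈φ * a + 1⌉ := by rw [Int.ceil_add_one]; exact lt_add_one _
      _ ≤ ⌈φ * (a + 1 : ℕ)⌉ := Int.ceil_mono (by push_cast; linarith [one_lt_goldenRatio])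

theorem ceil_goldenRatio_mul_of_eq_floor {a m : ℕ} (hm : 0 < m) (ha : (a : ℤ) = ⌊φ * m⌋) :
    ⌈φ * a⌉ = a + m := by
  have hirr := irrational_goldenRatio_mul_natCast hm
  have hlo : (a : ℝ) < φ * m := by
    exact_mod_cast ha ▸ (Int.floor_le _).lt_of_ne (fun h => hirr.ne_int _ h.symm)
  have hhi : φ * m < a + 1 := by exact_mod_cast ha ▸ Int.lt_floor_add_one (φ * m)
  -- with `x = φ m - a ∈ (0, 1)`, `φ a = a + m - (φ - 1) x` since `φ² = φ + 1`
  have key : φ * a = a + m - (φ - 1) * (φ * m - a) := by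
    linear_combination (m : ℝ) * goldenRatio_sq
  rw [Int.ceil_eq_iff, key]
  push_cast
  constructor <;> nlinarith [one_lt_goldenRatio, goldenRatio_lt_two]

theorem goldenConj_pow_mem_Ioo {n : ℕ} (hn : 3 ≤ n) : ψ ^ n ∈ Set.Ioo ψ (ψ ^ 2) := by
  have habs : |ψ| < 1 := abs_lt.2 ⟨neg_one_lt_goldenConj, goldenConj_neg.trans one_pos⟩
  have hsq : ψ ^ 2 = ψ + 1 := goldenConj_sq
  have hpow : |ψ ^ n| < ψ ^ 2 :=
    calc |ψ ^ n| = |ψ| ^ n := abs_pow ψ n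
      _ ≤ |ψ| ^ 3 := pow_le_pow_of_le_one (abs_nonneg ψ) habs.le hn
      _ = |ψ| * ψ ^ 2 := by rw [pow_succ', sq_abs]
      _ < ψ ^ 2 := mul_lt_of_lt_one_left (sq_pos_of_neg goldenConj_neg) habs
  have := abs_lt.1 hpow
  constructor <;> nlinarith [goldenConj_neg]

theorem ceil_goldenRatio_mul_fib_sub_one {n : ℕ} (hn : 3 ≤ n) :
    ⌈φ * ((Nat.fib n - 1 : ℕ) : ℝ)⌉ = ((Nat.fib (n + 1) - 1 : ℕ) : ℤ) := by
  have h1 : 1 ≤ Nat.fib n := Nat.fib_pos.2 (by omega)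
  have h2 : 1 ≤ Nat.fib (n + 1) := Nat.fib_pos.2 (by omega)
  have hbinet := fib_succ_sub_goldenRatio_mul_fib n
  have hconj := goldenRatio_add_goldenConj
  obtain ⟨hlo, hhi⟩ := goldenConj_pow_mem_Ioo hn
  rw [Int.ceil_eq_iff]
  push_cast [h1, h2]
  constructor <;> nlinarith [goldenConj_sq]

theorem mem_beattySeq_pos_iff {r : ℝ} {n : ℕ} (hn : 0 < n) :
    (n : ℤ) ∈ {beattySeq r k | k > 0} ↔ ∃ m : ℕ, (n : ℤ) = ⌊r * m⌋ := by
  constructor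
  · rintro ⟨k, hk, hkn⟩
    refine ⟨k.toNat, ?_⟩
    have hcast : ((k.toNat : ℕ) : ℝ) = k := by exact_mod_cast Int.toNat_of_nonneg hk.le
    rw [← hkn, beattySeq, mul_comm, hcast]
  · rintro ⟨m, hm⟩
    have hm0 : m ≠ 0 := by
      rintro rfl
      rw [Nat.cast_zero, mul_zero, Int.floor_zero] at hm
      omega
    exact ⟨m, by positivity, by rw [beattySeq, hm, mul_comm]; rfl⟩

theorem xor_floor_goldenRatio_mul {n : ℕ} (hn : 0 < n) :
    Xor (∃ m : ℕ, (n : ℤ) = ⌊φ * m⌋) (∃ m : ℕ, (n : ℤ) = ⌊φ * m⌋ + m) := by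
  have h := (Irrational.beattySeq_symmDiff_beattySeq_pos holderConjugate_goldenRatio_add_one
    goldenRatio_irrational).ge (show (0 : ℤ) < n by exact_mod_cast hn)
  rw [Set.mem_symmDiff, mem_beattySeq_pos_iff hn, mem_beattySeq_pos_iff hn] at h
  simp only [add_one_mul, Int.floor_add_natCast] at h
  exact h

def IsEuclidP (p : ℕ × ℕ) : Prop :=
  p = (0, 0) ∨ 0 < min p.1 p.2 ∧ ((max p.1 p.2 : ℕ) : ℝ) < φ * (min p.1 p.2 : ℕ)

theorem isEuclidP_swap {p : ℕ × ℕ} : IsEuclidP p.swap ↔ IsEuclidP p := by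
  simp only [IsEuclidP, Prod.swap_eq_iff_eq_swap, Prod.swap_prod_mk, Prod.fst_swap,
    Prod.snd_swap, min_comm p.2, max_comm p.2]

theorem isEuclidP_iff_of_le {a b : ℕ} (hab : a ≤ b) :
    IsEuclidP (a, b) ↔ a = 0 ∧ b = 0 ∨ 0 < a ∧ (b : ℝ) < φ * a := by
  simp only [IsEuclidP, Prod.mk.injEq, min_eq_left hab, max_eq_right hab]

theorem lt_of_not_isEuclidP {a b : ℕ} (ha : 0 < a) (hab : a ≤ b) (h : ¬ IsEuclidP (a, b)) :
    φ * a < b := by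
  refine (not_lt.1 fun hb => h ?_).lt_of_ne ((irrational_goldenRatio_mul_natCast ha).ne_nat b)
  exact (isEuclidP_iff_of_le hab).2 (Or.inr ⟨ha, hb⟩)

theorem euclidMove_swap {p q : ℕ × ℕ} (h : euclidMove p q) : euclidMove p.swap q.swap := by
  obtain ⟨a, b⟩ := p
  dsimp only [euclidMove] at h
  rcases h with ⟨h₁, h₂, rfl⟩ | ⟨h₁, h₂, rfl⟩ | ⟨h₁, h₂, k, hk, hpos, rfl⟩ |
    ⟨h₁, h₂, k, hk, hpos, rfl⟩
  · exact Or.inr (Or.inl ⟨h₁, h₂, rfl⟩)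
  · exact Or.inl ⟨h₁, h₂, rfl⟩
  · have : a ≤ k * a := Nat.le_mul_of_pos_left a hk
    exact Or.inr (Or.inr (Or.inr ⟨h₁, show a < b by omega, k, hk, hpos, rfl⟩))
  · exact Or.inr (Or.inr (Or.inl ⟨h₁, h₂.le, k, hk, hpos, rfl⟩))

theorem euclidMove_iff_of_le {a b : ℕ} {q : ℕ × ℕ} (ha : 0 < a) (hab : a ≤ b) :
    euclidMove (a, b) q ↔ ∃ k, 1 ≤ k ∧ 0 < b - k * a ∧ q = (a, b - k * a) := by
  simp only [euclidMove]
  constructor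
  · rintro (⟨h, -⟩ | ⟨h, -⟩ | ⟨-, -, hk⟩ | ⟨-, h, -⟩) <;> first | exact hk | omega
  · exact fun hk => Or.inr (Or.inr (Or.inl ⟨ha, hab, hk⟩))

theorem not_isEuclidP_of_euclidMove {p q : ℕ × ℕ} (hp : IsEuclidP p) (h : euclidMove p q) :
    ¬ IsEuclidP q := by
  obtain ⟨a, b⟩ := p
  wlog hab : a ≤ b generalizing a b q
  · rw [← isEuclidP_swap] at hp ⊢
    exact this b a hp (euclidMove_swap h) (by omega)
  rcases (isEuclidP_iff_of_le hab).1 hp with ⟨rfl, rfl⟩ | ⟨ha, hb⟩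
  · rcases h with ⟨-, h, -⟩ | ⟨-, h, -⟩ | ⟨h, -⟩ | ⟨h, -⟩ <;> exact absurd h (lt_irrefl 0)
  obtain ⟨k, hk, hpos, rfl⟩ := (euclidMove_iff_of_le ha hab).1 h
  have hb2 : b < 2 * a := by
    have : (b : ℝ) < 2 * a := by nlinarith [goldenRatio_lt_two, (Nat.cast_pos.2 ha : (0 : ℝ) < a)]
    exact_mod_cast this
  have hk1 : k = 1 := by
    by_contra hk1
    have : 2 * a ≤ k * a := Nat.mul_le_mul_right a (by omega)
    omega
  subst hk1
  have hba : b - 1 * a < a := by omega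
  rw [← isEuclidP_swap, Prod.swap_prod_mk, isEuclidP_iff_of_le hba.le]
  -- `b < φ a` gives `φ (b - a) < φ (φ - 1) a = a`
  have hcast : ((b - 1 * a : ℕ) : ℝ) = b - a := by rw [one_mul, Nat.cast_sub (by omega)]
  rw [hcast]
  rintro (⟨-, rfl⟩ | ⟨-, hlt⟩)
  · exact lt_irrefl 0 ha
  · nlinarith [goldenRatio_sq, goldenRatio_pos]

theorem exists_euclidMove_isEuclidP {p : ℕ × ℕ} (hp : ¬ IsEuclidP p) :
    ∃ q, euclidMove p q ∧ IsEuclidP q := by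
  obtain ⟨a, b⟩ := p
  wlog hab : a ≤ b generalizing a b
  · obtain ⟨q, hq, hqP⟩ := this b a (by rwa [← isEuclidP_swap] at hp) (by omega)
    exact ⟨q.swap, euclidMove_swap hq, isEuclidP_swap.2 hqP⟩
  rcases Nat.eq_zero_or_pos a with rfl | ha
  · have hb : 0 < b := Nat.pos_of_ne_zero fun hb => hp (Or.inl (by rw [hb]))
    exact ⟨(0, 0), Or.inl ⟨rfl, hb, rfl⟩, Or.inl rfl⟩
  have hirr := irrational_goldenRatio_mul_natCast ha
  have hb := lt_of_not_isEuclidP ha hab hp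
  obtain ⟨d, r, hr, hdiv⟩ : ∃ d r, r < a ∧ a * d + r = b :=
    ⟨b / a, b % a, Nat.mod_lt b ha, Nat.div_add_mod b a⟩
  by_cases hra : (a : ℝ) < φ * r
  · have hr0 : 0 < r := by
      have := pos_of_mul_pos_right ((Nat.cast_pos.2 ha).trans hra) goldenRatio_pos.le
      exact_mod_cast this
    have hd : 1 ≤ d := by
      rcases Nat.eq_zero_or_pos d with rfl | hd
      · omega
      · exact hd
    have hsub : d * a + r = b := by rw [← hdiv, mul_comm]
    refine ⟨(a, r), (euclidMove_iff_of_le ha hab).2 ⟨d, hd, by omega, by rw [← hsub]; simp⟩, ?_⟩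
    rw [← isEuclidP_swap, Prod.swap_prod_mk, isEuclidP_iff_of_le hr.le]
    exact Or.inr ⟨hr0, hra⟩
  · -- `φ r < a` means `r < (φ - 1) a`, so `a + r < φ a`
    have har : ((a + r : ℕ) : ℝ) < φ * a := by
      refine lt_of_le_of_ne ?_ (hirr.ne_nat _).symm
      push_cast
      nlinarith [goldenRatio_sq, goldenRatio_pos]
    obtain ⟨e, rfl⟩ : ∃ e, d = e + 2 := by
      refine ⟨d - 2, ?_⟩
      by_contra hd
      have : a * d ≤ a * 1 := Nat.mul_le_mul_left a (by omega)
      have : (b : ℝ) ≤ ((a + r : ℕ) : ℝ) := by exact_mod_cast (by omega : b ≤ a + r)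
      linarith
    have hsub : (e + 1) * a + (a + r) = b := by rw [← hdiv]; ring
    refine ⟨(a, a + r), (euclidMove_iff_of_le ha hab).2 ⟨e + 1, by omega, by omega, ?_⟩, ?_⟩
    · rw [Prod.mk.injEq]; omega
    · exact (isEuclidP_iff_of_le (by omega)).2 (Or.inr ⟨ha, har⟩)

theorem isEuclidP_iff (p : ℕ × ℕ) : IsEuclidP p ↔ ∀ q, euclidMove p q → ¬ IsEuclidP q :=
  ⟨fun hp _ => not_isEuclidP_of_euclidMove hp, fun h => by_contra fun hp =>
    let ⟨q, hq, hqP⟩ := exists_euclidMove_isEuclidP hp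
    h q hq hqP⟩

theorem floor_goldenRatio_mul_pos {m : ℕ} (hm : 0 < m) : 0 < ⌊φ * m⌋ := by
  rw [Int.floor_pos]
  have : (1 : ℝ) ≤ m := by exact_mod_cast hm
  nlinarith [one_lt_goldenRatio]

theorem fib_two_mul_add_two_sub_one_eq_zero_iff {k : ℕ} :
    Nat.fib (2 * k + 2) - 1 = 0 ↔ k = 0 := by
  refine ⟨fun h => ?_, by rintro rfl; rfl⟩
  by_contra hk
  have : Nat.fib 4 ≤ Nat.fib (2 * k + 2) := Nat.fib_mono (by omega)
  rw [show Nat.fib 4 = 3 from rfl] at this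
  omega

/-- At `k = 0` the exclusion removes `(0, 0)` and the Fibonacci family contributes `(0, 1)`. -/
inductive IsModWythoffPair : ℕ → ℕ → Prop
  | wythoff {a m : ℕ} : (a : ℤ) = ⌊φ * m⌋ →
      (¬ ∃ k, a = Nat.fib (2 * k + 1) - 1 ∧ a + m = Nat.fib (2 * k + 2) - 1) →
      IsModWythoffPair a (a + m)
  | fib (k : ℕ) : IsModWythoffPair (Nat.fib (2 * k + 2) - 1) (Nat.fib (2 * k + 3) - 1)

namespace IsModWythoffPair

theorem lt {a b : ℕ} : IsModWythoffPair a b → a < b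
  | @wythoff a m ha hex => by
    rcases Nat.eq_zero_or_pos m with rfl | hm
    · simp only [CharP.cast_eq_zero, mul_zero, Int.floor_zero, Nat.cast_eq_zero] at ha
      exact absurd ⟨0, by simp [ha]⟩ hex
    · omega
  | fib k => by
    have : Nat.fib (2 * k + 2) < Nat.fib (2 * k + 3) := Nat.fib_lt_fib_succ (by omega)
    have := Nat.fib_pos.2 (show 0 < 2 * k + 2 by omega)
    omega

theorem left_pos_of_eq_floor {a m : ℕ} (h : IsModWythoffPair a (a + m)) (ha : (a : ℤ) = ⌊φ * m⌋) :
    0 < a := by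
  have := floor_goldenRatio_mul_pos (show 0 < m by have := h.lt; omega)
  omega

theorem ceil_eq {a b : ℕ} (h : IsModWythoffPair a b) (ha : 0 < a) : ⌈φ * a⌉ = b := by
  cases h with
  | @wythoff a m ham hex =>
    have hm : 0 < m := by have := (wythoff ham hex).lt; omega
    rw [ceil_goldenRatio_mul_of_eq_floor hm ham, Nat.cast_add]
  | fib k =>
    have hk : k ≠ 0 := fun hk => by rw [← fib_two_mul_add_two_sub_one_eq_zero_iff] at hk; omega
    exact ceil_goldenRatio_mul_fib_sub_one (by omega)

theorem eq_one_of_zero {b : ℕ} (h : IsModWythoffPair 0 b) : b = 1 := by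
  generalize ha : 0 = a at h
  cases h with
  | @wythoff a m ham hex => exact absurd ha ((wythoff ham hex).left_pos_of_eq_floor ham).ne
  | fib k => rw [eq_comm, fib_two_mul_add_two_sub_one_eq_zero_iff] at ha; subst ha; rfl

theorem not_isEuclidP {a b : ℕ} (h : IsModWythoffPair a b) :
    ¬ IsEuclidP (a, b) := by
  rw [isEuclidP_iff_of_le h.lt.le]
  rcases Nat.eq_zero_or_pos a with rfl | ha
  · rintro (⟨-, hb⟩ | ⟨h0, -⟩)
    · exact absurd h.eq_one_of_zero (by omega)
    · exact lt_irrefl 0 h0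
  · rintro (⟨h0, -⟩ | ⟨-, hb⟩)
    · omega
    · have := Int.le_ceil (φ * a)
      rw [h.ceil_eq ha, Int.cast_natCast] at this
      linarith

theorem right_unique {a b c : ℕ} (hb : IsModWythoffPair a b) (hc : IsModWythoffPair a c) :
    b = c := by
  rcases Nat.eq_zero_or_pos a with rfl | ha
  · rw [hb.eq_one_of_zero, hc.eq_one_of_zero]
  · exact_mod_cast (hb.ceil_eq ha).symm.trans (hc.ceil_eq ha)

theorem left_unique {a b c : ℕ} (ha : IsModWythoffPair a c) (hb : IsModWythoffPair b c) :
    a = b := by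
  rcases Nat.eq_zero_or_pos a with rfl | ha0
  · have := hb.lt; rw [ha.eq_one_of_zero] at this; omega
  rcases Nat.eq_zero_or_pos b with rfl | hb0
  · have := ha.lt; rw [hb.eq_one_of_zero] at this; omega
  exact strictMono_ceil_goldenRatio_mul.injective ((ha.ceil_eq ha0).trans (hb.ceil_eq hb0).symm)

theorem not_chain {a b c : ℕ} (h₁ : IsModWythoffPair a b) (h₂ : IsModWythoffPair b c) :
    False := by
  have hb := h₁.lt
  cases h₁ with
  | @wythoff a m ham hex =>
    have ha := (wythoff ham hex).left_pos_of_eq_floor ham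
    generalize hb' : a + m = b at h₂
    cases h₂ with
    | @wythoff b m' hbm _ =>
      -- `a + m` would lie in both complementary Beatty sequences
      have hsmall : ∃ i : ℕ, ((a + m : ℕ) : ℤ) = ⌊φ * i⌋ := ⟨m', by rw [hb']; exact hbm⟩
      have hbig : ∃ i : ℕ, ((a + m : ℕ) : ℤ) = ⌊φ * i⌋ + i := ⟨m, by push_cast; rw [ham]⟩
      rcases xor_floor_goldenRatio_mul (n := a + m) (by omega) with ⟨-, h⟩ | ⟨-, h⟩
      · exact h hbig
      · exact h hsmall
    | fib k =>
      have hk : k ≠ 0 := fun hk => by rw [← fib_two_mul_add_two_sub_one_eq_zero_iff] at hk; omega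
      -- `⌈φ a⌉ = F (2k+2) - 1 = ⌈φ (F (2k+1) - 1)⌉` makes `(a, a + m)` the excluded pair
      refine hex ⟨k, strictMono_ceil_goldenRatio_mul.injective ?_, hb'⟩
      rw [ceil_goldenRatio_mul_fib_sub_one (n := 2 * k + 1) (by omega), ← hb',
        ← (wythoff ham hex).ceil_eq ha]
  | fib k =>
    generalize hb' : Nat.fib (2 * k + 3) - 1 = b at h₂
    cases h₂ with
    | @wythoff b m' hbm hex =>
      -- `c = ⌈φ b⌉ = F (2k+4) - 1`, so `(b, c)` is the excluded pair
      have hc := (wythoff hbm hex).ceil_eq (by omega)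
      rw [← hb', ceil_goldenRatio_mul_fib_sub_one (by omega)] at hc
      exact hex ⟨k + 1, hb'.symm, by rw [← hb']; exact_mod_cast hc.symm⟩
    | fib k' =>
      have h₁ := Nat.fib_pos.2 (show 0 < 2 * k + 3 by omega)
      have h₂ := Nat.fib_pos.2 (show 0 < 2 * k' + 2 by omega)
      have := Nat.fib_add_two_strictMono.injective (a₁ := 2 * k + 1) (a₂ := 2 * k')
        (show Nat.fib (2 * k + 3) = Nat.fib (2 * k' + 2) by omega)
      omega

end IsModWythoffPair

def IsUnpushedP (a b : ℕ) : Prop := IsModWythoffPair a b ∨ IsModWythoffPair b a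

theorem exists_isUnpushedP (n : ℕ) : ∃ c, IsUnpushedP n c := by
  by_cases hfib : ∃ j, Nat.fib j = n + 1
  · obtain ⟨i, hi, hin⟩ : ∃ i, 2 ≤ i ∧ Nat.fib i = n + 1 := by
      obtain ⟨_ | _ | j, hj⟩ := hfib
      · simp at hj
      · exact ⟨2, le_rfl, hj⟩
      · exact ⟨j + 2, by omega, hj⟩
    obtain ⟨k, hk | hk⟩ := Nat.even_or_odd' (i - 2)
    · refine ⟨Nat.fib (2 * k + 3) - 1, Or.inl ?_⟩
      have := IsModWythoffPair.fib k
      rwa [show 2 * k + 2 = i by omega, hin, Nat.add_sub_cancel] at this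
    · refine ⟨Nat.fib (2 * k + 2) - 1, Or.inr ?_⟩
      have := IsModWythoffPair.fib k
      rwa [show 2 * k + 3 = i by omega, hin, Nat.add_sub_cancel] at this
  · have hn : 0 < n := Nat.pos_of_ne_zero fun h => hfib ⟨1, by simp [h]⟩
    have hfib' : ∀ j, Nat.fib j - 1 ≠ n := fun j h => hfib ⟨j, by omega⟩
    rcases xor_floor_goldenRatio_mul hn with ⟨⟨m, hm⟩, -⟩ | ⟨⟨m, hm⟩, -⟩
    · exact ⟨n + m, Or.inl (.wythoff hm fun ⟨k, hk, _⟩ => hfib' _ hk.symm)⟩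
    · have hmn : m ≤ n := by
        have := Int.floor_nonneg.2 (by positivity : (0 : ℝ) ≤ φ * m)
        omega
      have ha : ((n - m : ℕ) : ℤ) = ⌊φ * m⌋ := by push_cast [hmn]; omega
      refine ⟨n - m, Or.inr ?_⟩
      have := IsModWythoffPair.wythoff ha fun ⟨k, _, hk⟩ => hfib' (2 * k + 2) (by omega)
      rwa [Nat.sub_add_cancel hmn] at this

theorem IsUnpushedP.symm {a b : ℕ} (h : IsUnpushedP a b) : IsUnpushedP b a := Or.symm h

theorem IsUnpushedP.unique {a b c : ℕ} (hb : IsUnpushedP a b) (hc : IsUnpushedP a c) :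
    b = c := by
  rcases hb with hb | hb <;> rcases hc with hc | hc
  · exact hb.right_unique hc
  · exact (hc.not_chain hb).elim
  · exact (hb.not_chain hc).elim
  · exact hb.left_unique hc

theorem IsUnpushedP.not_isEuclidP {a b : ℕ} (h : IsUnpushedP a b) : ¬ IsEuclidP (a, b) := by
  rcases h with h | h
  · exact h.not_isEuclidP
  · rw [← isEuclidP_swap]; exact h.not_isEuclidP

theorem nimMove_swap {p q : ℕ × ℕ} (h : nimMove p q) : nimMove p.swap q.swap := Or.symm h

theorem IsUnpushedP.not_nimMove {a b : ℕ} {q : ℕ × ℕ} (h : IsUnpushedP a b)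
    (hq : nimMove (a, b) q) : ¬ IsUnpushedP q.1 q.2 := by
  obtain ⟨c, d⟩ := q
  intro hcd
  rcases hq with ⟨hlt, hd⟩ | ⟨hlt, hc⟩
  · dsimp only at hlt hd; subst hd
    exact hlt.ne (hcd.symm.unique h.symm)
  · dsimp only at hlt hc; subst hc
    exact hlt.ne (hcd.unique h)

theorem exists_nimMove_isUnpushedP {a b : ℕ} (hE : ¬ IsEuclidP (a, b))
    (hU : ¬ IsUnpushedP a b) :
    ∃ q, nimMove (a, b) q ∧ IsUnpushedP q.1 q.2 := by
  wlog hab : a ≤ b generalizing a b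
  · obtain ⟨q, hq, hqU⟩ :=
      this (by rwa [← isEuclidP_swap] at hE) (fun h => hU h.symm) (by omega)
    exact ⟨q.swap, nimMove_swap hq, hqU.symm⟩
  obtain ⟨c, hc⟩ := exists_isUnpushedP a
  refine ⟨(a, c), Or.inr ⟨lt_of_le_of_ne ?_ fun (h : c = b) => hU (h ▸ hc), rfl⟩, hc⟩
  rcases Nat.eq_zero_or_pos a with rfl | ha
  · have hb : b ≠ 0 := fun hb => hE (Or.inl (by rw [hb]))
    rcases hc with hc | hc
    · rw [hc.eq_one_of_zero]; omega
    · exact absurd hc.lt (Nat.not_lt_zero c)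
  · rcases hc with hc | hc
    · have : (c : ℤ) ≤ b :=
        (hc.ceil_eq ha).symm.le.trans (Int.ceil_le.2 (lt_of_not_isEuclidP ha hab hE).le)
      exact_mod_cast this
    · exact (hc.lt.trans_le hab).le

theorem isUnpushedP_iff {a b : ℕ} :
    IsUnpushedP a b ↔ ¬ IsEuclidP (a, b) ∧ ∀ q, nimMove (a, b) q → ¬ IsUnpushedP q.1 q.2 :=
  ⟨fun h => ⟨h.not_isEuclidP, fun _ => h.not_nimMove⟩, fun ⟨hE, hN⟩ => by_contra fun hU =>
    let ⟨q, hq, hqU⟩ := exists_nimMove_isUnpushedP hE hU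
    hN q hq hqU⟩

def IsNimPushEuclidP : Bool × (ℕ × ℕ) → Prop
  | (true, (a, b)) => IsUnpushedP a b
  | (false, p) => IsEuclidP p

theorem isNimPushEuclidP_iff (p : Bool × (ℕ × ℕ)) :
    IsNimPushEuclidP p ↔ ∀ q, nimPushEuclidMove p q → ¬ IsNimPushEuclidP q := by
  obtain ⟨_ | _, a, b⟩ := p
  · rw [IsNimPushEuclidP, isEuclidP_iff]
    simp [IsNimPushEuclidP, nimPushEuclidMove]
  · simpa [IsNimPushEuclidP, nimPushEuclidMove] using isUnpushedP_iff

theorem wellFounded_flip_nimPushEuclidMove : WellFounded (flip nimPushEuclidMove) := by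
  refine Subrelation.wf (fun {q p} h => ?_)
    (measure fun p : Bool × (ℕ × ℕ) => p.2.1 + p.2.2 + p.1.toNat).wf
  obtain ⟨s, a, b⟩ := p
  obtain ⟨t, c, d⟩ := q
  simp only [flip, nimPushEuclidMove, nimMove, euclidMove, Prod.mk.injEq] at h
  show c + d + t.toNat < a + b + s.toNat
  rcases h with ⟨rfl, ⟨rfl, h⟩ | ⟨rfl, rfl, rfl⟩⟩ | ⟨rfl, rfl, h⟩
  · omega
  · exact Nat.add_lt_add_left Nat.zero_lt_one _
  · rcases h with ⟨-, h, rfl, rfl⟩ | ⟨-, h, rfl, rfl⟩ | ⟨h, -, k, hk, hpos, rfl, rfl⟩ |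
      ⟨h, -, k, hk, hpos, rfl, rfl⟩
    · omega
    · omega
    · have := Nat.le_mul_of_pos_left c hk; omega
    · have := Nat.le_mul_of_pos_left d hk; omega

theorem nim_push_euclid_P_positions
    (P : Bool × (ℕ × ℕ) → Prop)
    (hP : ∀ p, P p ↔ ∀ q, nimPushEuclidMove p q → ¬ P q) :
    P (true, (0, 1)) ∧
    ∀ a b : ℕ, 0 < a → a ≤ b → (b : ℤ) = ⌈Φ * (a : ℝ)⌉ →
      (((∃ m : ℕ, (a : ℤ) = ⌊Φ * (m : ℝ)⌋ ∧ b = a + m) ∧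
          ¬ ∃ k : ℕ, a = Nat.fib (2 * k + 1) - 1 ∧ b = Nat.fib (2 * k + 2) - 1) ∨
        (∃ k : ℕ, a = Nat.fib (2 * k + 2) - 1 ∧ b = Nat.fib (2 * k + 3) - 1)) →
      P (true, (a, b)) := by
  have hPQ := wellFounded_flip_nimPushEuclidMove.kernel_unique hP isNimPushEuclidP_iff
  refine ⟨(hPQ _).2 (Or.inl (IsModWythoffPair.fib 0)), fun a b _ _ _ hab => (hPQ _).2 (Or.inl ?_)⟩
  rcases hab with ⟨⟨m, ham, rfl⟩, hex⟩ | ⟨k, rfl, rfl⟩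
  · exact .wythoff ham hex
  · exact .fib k
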